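/- arXiv:2203.00233 — 12 statements merged into one kernel-verified Lean document; each statement's English description precedes it below -/
import Mathlib

section
/- Let α be a type and h : Finset α → ℝ a monotone submodular set function. Then the sequence function f defined on lists over α by f(L) = h(the finite set of elements occurring in L) is ordered-submodular. -/
/-- A sequence function `f : List α → ℝ` is **ordered-submodular** if for all lists
`A, B` and elements `s, s̄`:
`f(A ++ [s]) − f(A) ≥ f(A ++ [s] ++ B) − f(A ++ [s̄] ++ B)`. -/
def OrderedSubmodular {α : Type*} (f : List α → ℝ) : Prop :=
  ∀ (A B : List α) (s sbar : α),
    f (A ++ [s] ++ B) - f (A ++ [sbar] ++ B) ≤ f (A ++ [s]) - f A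

/-- A set function is monotone: `h A ≤ h B` whenever `A ⊆ B`. -/
def SetMonotone {α : Type*} (h : Finset α → ℝ) : Prop :=
  ∀ A B : Finset α, A ⊆ B → h A ≤ h B

/-- A set function is submodular:
`h(insert x A) − h(A) ≥ h(insert x B) − h(B)` whenever `A ⊆ B`. -/
def SetSubmodular {α : Type*} [DecidableEq α] (h : Finset α → ℝ) : Prop :=
  ∀ A B : Finset α, A ⊆ B → ∀ x : α,
    h (insert x B) - h B ≤ h (insert x A) - h A

theorem SetSubmodular.sub_insert_le_of_subset {α : Type*} [DecidableEq α] {h : Finset α → ℝ}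
    (hsub : SetSubmodular h) (hmono : SetMonotone h) {A T : Finset α} (hAT : A ⊆ T) (s s' : α) :
    h (insert s T) - h (insert s' T) ≤ h (insert s A) - h A := by
  have hgain : h (insert s T) - h T ≤ h (insert s A) - h A := hsub A T hAT s
  have hloss : h T ≤ h (insert s' T) := hmono T _ (Finset.subset_insert s' T)
  linarith

theorem List.toFinset_append_singleton_append {α : Type*} [DecidableEq α] (A B : List α) (s : α) :
    (A ++ [s] ++ B).toFinset = insert s (A.toFinset ∪ B.toFinset) := by
  ext x
  simp only [List.mem_toFinset, List.mem_append, List.mem_singleton, Finset.mem_insert,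
    Finset.mem_union]
  tauto

/-- if `h` is a monotone submodular set function, then the sequence
function `L ↦ h(L.toFinset)` is ordered-submodular. -/
theorem orderedSubmodular_of_monotone_submodular {α : Type*} [DecidableEq α]
    (h : Finset α → ℝ) (hmono : SetMonotone h) (hsub : SetSubmodular h) :
    OrderedSubmodular (fun L : List α => h L.toFinset) := by
  intro A B s sbar
  have hprefix : (A ++ [s]).toFinset = insert s A.toFinset := by simp
  simp only [List.toFinset_append_singleton_append, hprefix]
  exact hsub.sub_insert_le_of_subset hmono Finset.subset_union_left s sbar
end

section
/- Let α be a type and h : Finset α → ℝ a set function. If the sequence function f defined on lists over α by f(L) = h(the finite set of elements occurring in L) is ordered-submodular, then h is monotone and submodular. -/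
/-
Both properties come from single instances of ordered submodularity for `L ↦ h L.toFinset`.
Taking `B = []` and `s̄ = s` makes the left-hand side vanish, so adding an element never
decreases `h`; monotonicity follows by adding the elements of the larger set one at a time.
For `A ⊆ B` with `B` nonempty, take `s̄` to be any `t ∈ B`: the lists `A ++ [x] ++ B` and
`A ++ [t] ++ B` then have underlying sets `insert x B` and `B`, which is exactly submodularity.
-/

namespace OrderedSubmodular

variable {α : Type*} [DecidableEq α] {h : Finset α → ℝ}

theorem le_insert (hf : OrderedSubmodular (fun L : List α => h L.toFinset))
    (S : Finset α) (s : α) : h S ≤ h (insert s S) := by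
  have key := hf S.toList [] s s
  simp only [sub_self, List.append_nil, List.toFinset_append, Finset.toList_toFinset,
    List.toFinset_cons, List.toFinset_nil, insert_empty_eq, Finset.union_singleton] at key
  linarith

theorem setMonotone (hf : OrderedSubmodular (fun L : List α => h L.toFinset)) :
    SetMonotone h :=
  fun _ _ hAB => Finset.monotone_iff_forall_le_insert.2 (fun S s _ => hf.le_insert S s) hAB

theorem setSubmodular (hf : OrderedSubmodular (fun L : List α => h L.toFinset)) :
    SetSubmodular h := by
  intro A B hAB x
  obtain rfl | ⟨t, ht⟩ := B.eq_empty_or_nonempty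
  · rw [Finset.subset_empty.1 hAB]
  have key := hf A.toList B.toList x t
  simp only [List.toFinset_append, Finset.toList_toFinset, List.toFinset_cons,
    List.toFinset_nil, insert_empty_eq, Finset.union_singleton] at key
  have hxB : insert x A ∪ B = insert x B := by
    rw [Finset.insert_union, Finset.union_eq_right.2 hAB]
  have htB : insert t A ∪ B = B := by
    rw [Finset.insert_union, Finset.union_eq_right.2 hAB, Finset.insert_eq_of_mem ht]
  rwa [hxB, htB] at key

end OrderedSubmodular

/-- if the sequence function `L ↦ h(L.toFinset)` is ordered-submodular,
then the set function `h` is monotone and submodular. -/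
theorem monotone_submodular_of_orderedSubmodular {α : Type*} [DecidableEq α]
    (h : Finset α → ℝ)
    (hf : OrderedSubmodular (fun L : List α => h L.toFinset)) :
    SetMonotone h ∧ SetSubmodular h :=
  ⟨hf.setMonotone, hf.setSubmodular⟩
end

section
/- Let α be a type, h : Finset α → ℝ a monotone submodular set function, and t a natural number. Then the sequence function f defined on lists S over α by f(S) = h(the finite set of elements occurring among the first t entries of S) (i.e. f(S) = h(toFinset(S.take t)), which equals h of all the elements of S when S has length at most t) is ordered-submodular. -/
/-- thresholding a monotone submodular set function at the first `t`
entries of a list yields an ordered-submodular sequence function. -/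
theorem orderedSubmodular_threshold {α : Type*} [DecidableEq α]
    (h : Finset α → ℝ) (hmono : SetMonotone h) (hsub : SetSubmodular h) (t : ℕ) :
    OrderedSubmodular (fun S : List α => h (S.take t).toFinset) := by
  intro A B s sbar
  simp only
  by_cases ht : t ≤ A.length
  · have e : ∀ L : List α, (A ++ L).take t = A.take t := by
      intro L
      rw [List.take_append, Nat.sub_eq_zero_of_le ht, List.take_zero,
        List.append_nil]
    rw [List.append_assoc, List.append_assoc, e, e, e]
  · push_neg at ht
    have e : ∀ (x : α) (L : List α), ((A ++ [x]) ++ L).take t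
        = A ++ x :: L.take (t - A.length - 1) := by
      intro x L
      rw [List.take_append]
      have h1 : t - (A ++ [x]).length = t - A.length - 1 := by simp [Nat.sub_sub]
      rw [h1, List.take_of_length_le (by simpa using ht)]
      simp
    have e2 : (A ++ [s]).take t = A ++ [s] := List.take_of_length_le (by simpa using ht)
    rw [e, e, e2]
    set A' := A.toFinset with hA'
    set B' := (B.take (t - A.length - 1)).toFinset with hB'
    have hts : ∀ x : α, (A ++ x :: B.take (t - A.length - 1)).toFinset = insert x (A' ∪ B') := by
      intro x
      simp [hA', hB', List.toFinset_append, Finset.union_insert]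
    have hts2 : (A ++ [s]).toFinset = insert s A' := by
      ext y; simp [hA', or_comm]
    have e3 : A.take t = A := List.take_of_length_le ht.le
    rw [hts, hts, hts2, e3]
    have h1 := hsub A' (A' ∪ B') Finset.subset_union_left s
    have h2 := hmono (A' ∪ B') (insert sbar (A' ∪ B')) (Finset.subset_insert _ _)
    linarith
end

section
/- Let α be a type, h : Finset α → ℝ a monotone submodular set function, and g : ℕ → ℝ an antitone sequence of nonnegative weights (g(i) ≥ g(j) ≥ 0 whenever i ≤ j). Then the sequence function f defined on a list S of length k over α by f(S) = Σ_{i=1}^{k} g(i)·[h(toFinset(S.take i)) − h(toFinset(S.take (i−1)))] is ordered-submodular. -/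


private noncomputable def Fw {α : Type*} [DecidableEq α] (h : Finset α → ℝ) (g : ℕ → ℝ)
    (S : List α) : ℝ :=
  ∑ i ∈ Finset.range S.length,
    g (i + 1) * (h (S.take (i + 1)).toFinset - h (S.take i).toFinset)

private lemma Fw_append_single {α : Type*} [DecidableEq α] (h : Finset α → ℝ) (g : ℕ → ℝ)
    (L : List α) (b : α) :
    Fw h g (L ++ [b]) = Fw h g L + g (L.length + 1) *
      (h (L ++ [b]).toFinset - h L.toFinset) := by
  unfold Fw
  have hl : (L ++ [b]).length = L.length + 1 := by simp
  rw [hl, Finset.sum_range_succ]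
  congr 1
  · apply Finset.sum_congr rfl
    intro i hi
    rw [Finset.mem_range] at hi
    rw [List.take_append_of_le_length (by omega),
        List.take_append_of_le_length (by omega)]
  · rw [show L.length + 1 = (L ++ [b]).length from hl.symm, List.take_length,
        List.take_append_of_le_length le_rfl, List.take_length]


/-- given a monotone submodular set function `h` and antitone
nonnegative rank weights `g(1) ≥ g(2) ≥ ⋯ ≥ 0`, the sequence function
`f(S) = Σ_{i=1}^{|S|} g(i) · [h(toFinset (S.take i)) − h(toFinset (S.take (i−1)))]`
is ordered-submodular. -/
theorem orderedSubmodular_weighted {α : Type*} [DecidableEq α]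
    (h : Finset α → ℝ) (hmono : SetMonotone h) (hsub : SetSubmodular h)
    (g : ℕ → ℝ) (hg_anti : ∀ i j : ℕ, i ≤ j → g j ≤ g i) (hg_nonneg : ∀ i, 0 ≤ g i) :
    OrderedSubmodular (fun S : List α =>
      ∑ i ∈ Finset.range S.length,
        g (i + 1) * (h (S.take (i + 1)).toFinset - h (S.take i).toFinset)) := by
  intro A B s sbar
  show Fw h g (A ++ [s] ++ B) - Fw h g (A ++ [sbar] ++ B) ≤ Fw h g (A ++ [s]) - Fw h g A
  set n := A.length with hn
  set R := h (insert s A.toFinset) - h A.toFinset with hR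
  have hRnn : 0 ≤ R := by
    have := hmono A.toFinset (insert s A.toFinset) (Finset.subset_insert _ _)
    simp [hR]; linarith
  have hDle : ∀ C : List α,
      h (insert s (A ++ C).toFinset) - h (insert sbar (A ++ C).toFinset) ≤ R := by
    intro C
    have h1 := hmono (A ++ C).toFinset (insert sbar (A ++ C).toFinset) (Finset.subset_insert _ _)
    have h2 : A.toFinset ⊆ (A ++ C).toFinset := by
      intro x hx; simp [List.toFinset_append] at hx ⊢; tauto
    have h3 := hsub A.toFinset (A ++ C).toFinset h2 s
    simp only [hR]; linarith
  have tfs : ∀ (x : α) (C : List α),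
      (A ++ [x] ++ C).toFinset = insert x (A ++ C).toFinset := by
    intro x C; ext y; simp [List.toFinset_append]; try tauto
  have key : ∀ C : List α,
      Fw h g (A ++ [s] ++ C) - Fw h g (A ++ [sbar] ++ C) ≤
        (g (n + 1) - g (n + 1 + C.length)) * R + g (n + 1 + C.length) *
          (h (insert s (A ++ C).toFinset) - h (insert sbar (A ++ C).toFinset)) := by
    intro C
    induction C using List.reverseRecOn with
    | nil =>
      simp only [List.append_nil, List.length_nil, Nat.add_zero]
      rw [Fw_append_single h g A s, Fw_append_single h g A sbar]
      have e1 : (A ++ [s]).toFinset = insert s A.toFinset := by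
        ext y; simp [List.toFinset_append]
      have e2 : (A ++ [sbar]).toFinset = insert sbar A.toFinset := by
        ext y; simp [List.toFinset_append]
      rw [e1, e2]
      ring_nf
      try linarith
    | append_singleton B' b ih =>
      have hm : (A ++ [s] ++ B').length = n + 1 + B'.length := by simp [hn]; omega
      have hm' : (A ++ [sbar] ++ B').length = n + 1 + B'.length := by simp [hn]; omega
      rw [show A ++ [s] ++ (B' ++ [b]) = (A ++ [s] ++ B') ++ [b] by simp,
          show A ++ [sbar] ++ (B' ++ [b]) = (A ++ [sbar] ++ B') ++ [b] by simp,
          Fw_append_single, Fw_append_single, hm, hm']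
      have e1 : ((A ++ [s] ++ B') ++ [b]).toFinset = insert s (A ++ (B' ++ [b])).toFinset := by
        rw [show (A ++ [s] ++ B') ++ [b] = A ++ [s] ++ (B' ++ [b]) by simp, tfs]
      have e2 : ((A ++ [sbar] ++ B') ++ [b]).toFinset
          = insert sbar (A ++ (B' ++ [b])).toFinset := by
        rw [show (A ++ [sbar] ++ B') ++ [b] = A ++ [sbar] ++ (B' ++ [b]) by simp, tfs]
      rw [e1, e2, tfs s B', tfs sbar B']
      have hlen : (B' ++ [b]).length = B'.length + 1 := by simp
      rw [hlen]
      have hco : g (n + 1 + B'.length + 1) ≤ g (n + 1 + B'.length) := hg_anti _ _ (by omega)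
      have hc := mul_le_mul_of_nonneg_left (hDle B') (sub_nonneg.2 hco)
      have idx : n + 1 + (B'.length + 1) = n + 1 + B'.length + 1 := by omega
      rw [idx]
      nlinarith [ih, hc]
  have final := key B
  have hDB := hDle B
  have hgn := hg_nonneg (n + 1 + B.length)
  have hlast := mul_le_mul_of_nonneg_left hDB hgn
  rw [Fw_append_single h g A s]
  have e1 : (A ++ [s]).toFinset = insert s A.toFinset := by
    ext y; simp [List.toFinset_append]
  rw [e1]
  simp only [hR] at *
  nlinarith [final, hlast]
end

section
/- Let α be a type, D a finite nonempty subset of α (the ground set), f an ordered-submodular sequence function on α with f(empty list) ≥ 0, and k a natural number. Suppose A is a list of length k that is greedy for f over D, i.e. every entry of A lies in D and for every i with 1 ≤ i ≤ k and every x ∈ D, f(A.take(i−1) ++ [x]) ≤ f(A.take i). Then for every list S of length k all of whose entries lie in D, f(S) ≤ 2·f(A). In other words, the greedy algorithm is a 2-approximation for maximizing a nonnegative ordered-submodular function over lists of length k. -/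
/-!
Interpolate between `S` and the greedy list `A` through the hybrids `A.take j ++ S.drop j`.
Replacing the `j`-th entry `S[j]` by `A[j]` loses, by ordered submodularity, at most the marginal
gain of appending `S[j]` to `A.take j`, and by greediness this is at most the gain
`f (A.take (j + 1)) - f (A.take j)` of the greedy step. Telescoping gives
`f S - f A ≤ f A - f []`.
-/

namespace OrderedSubmodular

variable {α : Type*} {f : List α → ℝ}

theorem hybrid_sub_hybrid_succ_le (hf : OrderedSubmodular f) (A S : List α) {j : ℕ}
    (hA : j < A.length) (hS : j < S.length) :
    f (A.take j ++ S.drop j) - f (A.take (j + 1) ++ S.drop (j + 1)) ≤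
      f (A.take j ++ [S[j]]) - f (A.take j) := by
  have h := hf (A.take j) (S.drop (j + 1)) S[j] A[j]
  rw [List.drop_eq_getElem_cons hS, List.take_succ_eq_append_getElem hA]
  simpa only [List.append_assoc, List.singleton_append] using h

theorem le_hybrid_add_of_greedy (hf : OrderedSubmodular f) {A S : List α}
    (hlen : A.length = S.length)
    (hgreedy : ∀ j (hS : j < S.length),
      f (A.take j ++ [S[j]]) ≤ f (A.take (j + 1))) :
    ∀ j ≤ A.length, f S ≤ f (A.take j ++ S.drop j) + (f (A.take j) - f []) := by
  intro j hj
  induction j with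
  | zero => simp
  | succ j ih =>
    have hA : j < A.length := by omega
    have hS : j < S.length := by omega
    linarith [ih (by omega), hf.hybrid_sub_hybrid_succ_le A S hA hS, hgreedy j hS]

theorem le_two_mul_sub_of_greedy (hf : OrderedSubmodular f) {A S : List α}
    (hlen : A.length = S.length)
    (hgreedy : ∀ j (hS : j < S.length),
      f (A.take j ++ [S[j]]) ≤ f (A.take (j + 1))) :
    f S ≤ 2 * f A - f [] := by
  have h := hf.le_hybrid_add_of_greedy hlen hgreedy A.length le_rfl
  rw [List.take_length, hlen, List.drop_length, List.append_nil] at h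
  linarith

end OrderedSubmodular

theorem greedy_two_approximation_general {α : Type*} (D : Finset α)
    (f : List α → ℝ) (hf : OrderedSubmodular f) (hf0 : 0 ≤ f [])
    (k : ℕ) (A : List α) (hAlen : A.length = k)
    (hgreedy : ∀ i : ℕ, 1 ≤ i → i ≤ k → ∀ x ∈ D,
      f (A.take (i - 1) ++ [x]) ≤ f (A.take i)) :
    ∀ S : List α, S.length = k → (∀ a ∈ S, a ∈ D) → f S ≤ 2 * f A := by
  intro S hSlen hSmem
  have hstep : ∀ j (hS : j < S.length),
      f (A.take j ++ [S[j]]) ≤ f (A.take (j + 1)) := fun j hS =>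
    hgreedy (j + 1) j.succ_pos (by omega) S[j] (hSmem _ (List.getElem_mem hS))
  linarith [hf.le_two_mul_sub_of_greedy (hAlen.trans hSlen.symm) hstep]

/-- the greedy algorithm is a 2-approximation for maximizing a
nonnegative ordered-submodular function over lists of length `k` with entries
from a finite nonempty ground set `D`. -/
theorem greedy_two_approximation {α : Type*} (D : Finset α) (hD : D.Nonempty)
    (f : List α → ℝ) (hf : OrderedSubmodular f) (hf0 : 0 ≤ f [])
    (k : ℕ) (A : List α) (hAlen : A.length = k) (hAmem : ∀ a ∈ A, a ∈ D)
    (hgreedy : ∀ i : ℕ, 1 ≤ i → i ≤ k → ∀ x ∈ D,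
      f (A.take (i - 1) ++ [x]) ≤ f (A.take i)) :
    ∀ S : List α, S.length = k → (∀ a ∈ S, a ∈ D) → f S ≤ 2 * f A :=
  greedy_two_approximation_general D f hf hf0 k A hAlen hgreedy
end

section
/- Let α be a type, D a finite nonempty subset of α, f an ordered-submodular sequence function on α with f(empty list) ≥ 0, and k a natural number. Suppose A is a list of length k that is greedy for f over D, i.e. every entry of A lies in D and for every i with 1 ≤ i ≤ k and every x ∈ D, f(A.take(i−1) ++ [x]) ≤ f(A.take i). Then for every list S of length k all of whose entries lie in D and every i with 0 ≤ i ≤ k, f(A.take i ++ S.drop i) ≥ f(S) − f(A.take i), where S.drop i denotes the list S with its first i entries removed. -/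
/-- the key invariant of the greedy analysis.  If `A` is a greedy
list of length `k` for an ordered-submodular `f` over the ground set `D`, then for
every competitor list `S` of length `k` over `D` and every `i ≤ k`,
`f(A.take i ++ S.drop i) ≥ f(S) − f(A.take i)`. -/
theorem greedy_invariant {α : Type*} (D : Finset α) (hD : D.Nonempty)
    (f : List α → ℝ) (hf : OrderedSubmodular f) (hf0 : 0 ≤ f [])
    (k : ℕ) (A : List α) (hAlen : A.length = k) (hAmem : ∀ a ∈ A, a ∈ D)
    (hgreedy : ∀ i : ℕ, 1 ≤ i → i ≤ k → ∀ x ∈ D,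
      f (A.take (i - 1) ++ [x]) ≤ f (A.take i)) :
    ∀ S : List α, S.length = k → (∀ a ∈ S, a ∈ D) →
      ∀ i : ℕ, i ≤ k → f S - f (A.take i) ≤ f (A.take i ++ S.drop i) := by
  intro S hSlen hSmem i
  induction i with
  | zero => intro _; simp; linarith
  | succ n ih =>
    intro hik
    have hA : n < A.length := by omega
    have hS : n < S.length := by omega
    have hprev := ih (by omega)
    have hdrop : S.drop n = S[n] :: S.drop (n+1) := List.drop_eq_getElem_cons hS
    have htake : A.take n ++ [A[n]] = A.take (n+1) := by
      simpa using (List.take_concat_get A n hA)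
    have hsub := hf (A.take n) (S.drop (n+1)) (S[n]) (A[n])
    have hgr := hgreedy (n+1) (by omega) (by omega) S[n] (hSmem _ (List.getElem_mem hS))
    simp only [Nat.add_sub_cancel] at hgr
    have e1 : A.take n ++ [A[n]] ++ S.drop (n+1) = A.take (n+1) ++ S.drop (n+1) := by
      rw [htake]
    have e2 : A.take n ++ [S[n]] ++ S.drop (n+1) = A.take n ++ S.drop n := by
      rw [hdrop]; simp
    rw [e1, e2] at hsub
    linarith
end

section
/- Let U be a finite type of user types and M a type of movies. Let π : U → ℝ be nonnegative, let p : M → U → ℝ satisfy 0 ≤ p(m,u) ≤ 1 for all m, u, and let θ : U → ℕ be patience values. Then the user coverage sequence function f, defined on a list S = s₁ s₂ … s_k of movies by f(S) = Σ_{u ∈ U} π(u)·(1 − Π_{j=1}^{min(θ(u), k)} (1 − p(s_j, u))), is ordered-submodular. -/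
lemma cov_prod_nonneg {M U : Type*} (p : M → U → ℝ) (hp1 : ∀ m u, p m u ≤ 1) (u : U)
    (L : List M) : 0 ≤ (L.map (fun m => 1 - p m u)).prod := by
  apply List.prod_nonneg
  intro x hx
  simp only [List.mem_map] at hx
  obtain ⟨m, _, rfl⟩ := hx
  linarith [hp1 m u]

lemma cov_prod_le_one {M U : Type*} (p : M → U → ℝ) (hp0 : ∀ m u, 0 ≤ p m u)
    (hp1 : ∀ m u, p m u ≤ 1) (u : U)
    (L : List M) : (L.map (fun m => 1 - p m u)).prod ≤ 1 := by
  induction L with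
  | nil => simp
  | cons a t ih =>
    simp only [List.map_cons, List.prod_cons]
    have h0 := cov_prod_nonneg p hp1 u t
    nlinarith [hp0 a u, hp1 a u]

/-- the user coverage objective
`f(S) = Σ_u π(u) · (1 − Π_{j=1}^{min(θ(u), |S|)} (1 − p(s_j, u)))`
is ordered-submodular.  The product over the first `min(θ(u), |S|)` entries of `S`
is expressed as the product over the list `S.take (θ u)`. -/
theorem coverage_orderedSubmodular {U : Type*} [Fintype U] {M : Type*}
    (π : U → ℝ) (hπ : ∀ u, 0 ≤ π u)
    (p : M → U → ℝ) (hp0 : ∀ m u, 0 ≤ p m u) (hp1 : ∀ m u, p m u ≤ 1)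
    (θ : U → ℕ) :
    OrderedSubmodular (fun S : List M =>
      ∑ u : U, π u * (1 - ((S.take (θ u)).map (fun m => 1 - p m u)).prod)) := by
  intro A B s sbar
  simp only
  rw [← Finset.sum_sub_distrib, ← Finset.sum_sub_distrib]
  apply Finset.sum_le_sum
  intro u _
  by_cases hθ : θ u ≤ A.length
  · have h1 : ∀ (x : M) (C : List M), ((A ++ [x] ++ C).take (θ u)) = A.take (θ u) := by
      intro x C
      rw [List.append_assoc, List.take_append_of_le_length hθ]
    rw [h1 s B, h1 sbar B, List.take_append_of_le_length hθ]
  · push_neg at hθ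
    have hθ' : A.length + 1 ≤ θ u := hθ
    set k := θ u - (A.length + 1) with hk
    have h1 : ∀ (x : M) (C : List M), ((A ++ [x] ++ C).take (θ u)) = A ++ [x] ++ C.take k := by
      intro x C
      rw [List.take_append, List.take_of_length_le (by simpa using hθ')]
      congr 1
      simp [hk]
    have h2 : (A ++ [s]).take (θ u) = A ++ [s] :=
      List.take_of_length_le (by simpa using hθ')
    rw [h1 s B, h1 sbar B, h2]
    simp only [List.map_append, List.prod_append, List.map_cons, List.map_nil,
      List.prod_cons, List.prod_nil]
    set P := (A.map (fun m => 1 - p m u)).prod with hP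
    set Q := ((B.take k).map (fun m => 1 - p m u)).prod with hQ
    have hP0 : 0 ≤ P := cov_prod_nonneg p hp1 u A
    have hQ0 : 0 ≤ Q := cov_prod_nonneg p hp1 u _
    have hQ1 : Q ≤ 1 := cov_prod_le_one p hp0 hp1 u _
    have hs0 := hp0 s u
    have hs1 := hp1 s u
    have hsb0 := hp0 sbar u
    have hπu := hπ u
    -- need: π u * stuff ≤ π u * stuff'
    -- simplify: A.take (θ u) = A since θ u > length
    have hA : A.take (θ u) = A := List.take_of_length_le (le_of_lt hθ)
    rw [hA]
    ring_nf
    nlinarith [mul_nonneg hπu hP0, mul_nonneg (mul_nonneg hπu hP0) hs0,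
      mul_nonneg (mul_nonneg hπu hP0) hsb0, mul_nonneg (mul_nonneg hπu hP0) hQ0]
end

section
/- Let U be a finite type of user types and M a type of movies, with π : U → ℝ nonnegative, p : M → U → ℝ satisfying 0 ≤ p(m,u) ≤ 1, and θ : U → ℕ. Define the user coverage sequence function f on a list S = s₁ … s_k of movies by f(S) = Σ_{u ∈ U} π(u)·(1 − Π_{j=1}^{min(θ(u), k)} (1 − p(s_j, u))). Let D be a finite nonempty set of movies and k a natural number, and suppose A is a list of length k that is greedy for f over D, i.e. every entry of A lies in D and for every i with 1 ≤ i ≤ k and every x ∈ D, f(A.take(i−1) ++ [x]) ≤ f(A.take i). Then for every list S of length k of movies from D, f(S) ≤ 2·f(A): the greedy ranked list covers at least half as many users as the optimal ranked list. -/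
private lemma list_prod_mem01 {M : Type*} (c : M → ℝ) (h0 : ∀ m, 0 ≤ c m)
    (h1 : ∀ m, c m ≤ 1) (L : List M) :
    0 ≤ (L.map c).prod ∧ (L.map c).prod ≤ 1 := by
  induction L with
  | nil => simp
  | cons a t ih =>
    simp only [List.map_cons, List.prod_cons]
    refine ⟨mul_nonneg (h0 a) ih.1, ?_⟩
    nlinarith [h0 a, h1 a, ih.1, ih.2]

private lemma prod_key {M : Type*} (c : M → ℝ) (h0 : ∀ m, 0 ≤ c m) (h1 : ∀ m, c m ≤ 1)
    (θ : ℕ) (A B : List M) (s t : M) :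
    (((A ++ [t] ++ B).take θ).map c).prod - (((A ++ [s] ++ B).take θ).map c).prod
      ≤ ((A.take θ).map c).prod - (((A ++ [s]).take θ).map c).prod := by
  rcases le_or_gt θ A.length with hθ | hθ
  · have e1 : ∀ X : List M, ((A ++ X).take θ) = A.take θ := by
      intro X
      rw [List.take_append, Nat.sub_eq_zero_of_le hθ]
      simp
    rw [List.append_assoc, List.append_assoc, e1, e1, e1]
  · obtain ⟨r, hr⟩ : ∃ r, θ - A.length = r + 1 :=
      ⟨θ - A.length - 1, by omega⟩
    have hAfull : A.take θ = A := List.take_of_length_le (le_of_lt hθ)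
    have e2 : ∀ (x : M) (X : List M),
        ((A ++ [x] ++ X).take θ) = A ++ x :: X.take r := by
      intro x X
      rw [List.append_assoc, List.take_append, hAfull, hr]
      simp
    have e3 : (A ++ [s]).take θ = A ++ [s] := by
      rw [List.take_append, hAfull, hr]
      simp
    rw [e2, e2, e3, hAfull]
    simp only [List.map_append, List.prod_append, List.map_cons, List.prod_cons,
      List.map_nil, List.prod_nil]
    obtain ⟨hPA0, hPA1⟩ := list_prod_mem01 c h0 h1 A
    obtain ⟨hQ0, hQ1⟩ := list_prod_mem01 c h0 h1 (B.take r)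
    have hkey : 0 ≤ (List.map c A).prod *
        ((1 - (List.map c (B.take r)).prod) * (1 - c s) +
          (List.map c (B.take r)).prod * (1 - c t)) := by
      have h1' : 0 ≤ (1 - (List.map c (B.take r)).prod) * (1 - c s) :=
        mul_nonneg (by linarith) (by linarith [h1 s])
      have h2' : 0 ≤ (List.map c (B.take r)).prod * (1 - c t) :=
        mul_nonneg hQ0 (by linarith [h1 t])
      exact mul_nonneg hPA0 (by linarith)
    nlinarith [hkey]

/-- for the user coverage objective
`f(S) = Σ_u π(u) · (1 − Π_{j=1}^{min(θ(u), |S|)} (1 − p(s_j, u)))`,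
a greedy list `A` of length `k` over a finite nonempty ground set `D` of movies
covers at least half as many users as any list `S` of length `k` over `D`:
`f S ≤ 2 * f A`. -/
theorem coverage_greedy_two_approximation {U : Type*} [Fintype U] {M : Type*}
    (π : U → ℝ) (hπ : ∀ u, 0 ≤ π u)
    (p : M → U → ℝ) (hp0 : ∀ m u, 0 ≤ p m u) (hp1 : ∀ m u, p m u ≤ 1)
    (θ : U → ℕ)
    (f : List M → ℝ)
    (hf : ∀ S : List M, f S =
      ∑ u : U, π u * (1 - ((S.take (θ u)).map (fun m => 1 - p m u)).prod))
    (D : Finset M) (hD : D.Nonempty)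
    (k : ℕ) (A : List M) (hAlen : A.length = k) (hAmem : ∀ a ∈ A, a ∈ D)
    (hgreedy : ∀ i : ℕ, 1 ≤ i → i ≤ k → ∀ x ∈ D,
      f (A.take (i - 1) ++ [x]) ≤ f (A.take i)) :
    ∀ S : List M, S.length = k → (∀ a ∈ S, a ∈ D) → f S ≤ 2 * f A := by
  -- ordered submodularity of f
  have hsubmod : ∀ (P B : List M) (s t : M),
      f (P ++ [s] ++ B) - f (P ++ [t] ++ B) ≤ f (P ++ [s]) - f P := by
    intro P B s t
    rw [hf (P ++ [s] ++ B), hf (P ++ [t] ++ B), hf (P ++ [s]), hf P,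
      ← Finset.sum_sub_distrib, ← Finset.sum_sub_distrib]
    apply Finset.sum_le_sum
    intro u _
    have key := prod_key (fun m => 1 - p m u)
      (fun m => by show (0:ℝ) ≤ 1 - p m u; linarith [hp1 m u])
      (fun m => by show 1 - p m u ≤ (1:ℝ); linarith [hp0 m u])
      (θ u) P B s t
    nlinarith [mul_le_mul_of_nonneg_left key (hπ u)]
  intro S hSlen hSmem
  have hfnil : f [] = 0 := by simp [hf]
  set g : ℕ → ℝ := fun i => f (A.take i ++ S.drop i) with hg
  have hg0 : g 0 = f S := by simp [hg]
  have hgk : g k = f A := by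
    simp [hg, List.take_of_length_le (le_of_eq hAlen),
      List.drop_eq_nil_of_le (le_of_eq hSlen)]
  have hstep : ∀ i ∈ Finset.range k,
      g i - g (i + 1) ≤ f (A.take (i + 1)) - f (A.take i) := by
    intro i hi
    rw [Finset.mem_range] at hi
    have hiA : i < A.length := by omega
    have hiS : i < S.length := by omega
    have eS : S.drop i = S[i] :: S.drop (i + 1) := List.drop_eq_getElem_cons hiS
    have eA : A.take (i + 1) = A.take i ++ [A[i]] := (List.take_concat_get' A i hiA).symm
    have l1 : A.take i ++ S.drop i = A.take i ++ [S[i]] ++ S.drop (i + 1) := by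
      rw [eS, List.append_cons]
    have l2 : A.take (i + 1) ++ S.drop (i + 1) = A.take i ++ [A[i]] ++ S.drop (i + 1) := by
      rw [eA]
    have h1 : g i = f (A.take i ++ [S[i]] ++ S.drop (i + 1)) := by
      simp only [hg]; exact congrArg f l1
    have h2 : g (i + 1) = f (A.take i ++ [A[i]] ++ S.drop (i + 1)) := by
      simp only [hg]; exact congrArg f l2
    have h3 := hsubmod (A.take i) (S.drop (i + 1)) S[i] A[i]
    have h4 : f (A.take i ++ [S[i]]) ≤ f (A.take (i + 1)) := by
      have := hgreedy (i + 1) (by omega) (by omega) S[i]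
        (hSmem _ (List.getElem_mem hiS))
      simpa using this
    rw [h1, h2]
    linarith
  have hsum : ∑ i ∈ Finset.range k, (g i - g (i + 1))
      ≤ ∑ i ∈ Finset.range k, (f (A.take (i + 1)) - f (A.take i)) :=
    Finset.sum_le_sum hstep
  rw [Finset.sum_range_sub' g k, Finset.sum_range_sub (fun i => f (A.take i)) k] at hsum
  have hAk : A.take k = A := List.take_of_length_le (le_of_eq hAlen)
  rw [hg0, hgk, hAk] at hsum
  simp only [List.take_zero, hfnil] at hsum
  linarith
end

section
/- Let k be an even natural number with k ≥ 2. Consider the user coverage instance with user types and movies both indexed by {1, …, k}, where π(i) = 1/k for all i, patience θ(i) = i, and p(s_j, i) = 1 if j = i and 0 otherwise; the coverage function on a list S = t₁…t_m is f(S) = Σ_{i=1}^{k} π(i)·(1 − Π_{j=1}^{min(θ(i),m)} (1 − p(t_j,i))). Then: (i) the reversed list [s_k, s_{k−1}, …, s₁] satisfies the greedy property (for each step ℓ ∈ {1,…,k} and every movie x, f(prefix of length ℓ−1 followed by x) ≤ f(prefix of length ℓ)); (ii) f([s_k, s_{k−1}, …, s₁]) = 1/2; and (iii) f([s₁, s₂,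 …, s_k]) = 1. -/
private lemma prodInd {k : ℕ} (i : Fin k) (L : List (Fin k)) :
    (L.map (fun m => 1 - (if m = i then (1:ℝ) else 0))).prod = if i ∈ L then 0 else 1 := by
  induction L with
  | nil => simp
  | cons a L ih =>
    simp only [List.map_cons, List.prod_cons, ih, List.mem_cons]
    by_cases h : a = i
    · simp [h]
    · simp [h, Ne.symm h]

private lemma memTakeFinRange {k t : ℕ} (i : Fin k) :
    i ∈ (List.finRange k).take t ↔ (i:ℕ) < t := by
  rw [List.mem_take_iff_getElem]
  constructor
  · rintro ⟨j, hj, rfl⟩; simp at hj ⊢; omega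
  · intro h; exact ⟨i, by simp; omega, by simp⟩

private lemma memTakeRev {k t : ℕ} (i : Fin k) :
    i ∈ (List.finRange k).reverse.take t ↔ k ≤ t + (i:ℕ) := by
  rw [List.finRange_reverse, ← List.map_take, List.mem_map]
  constructor
  · rintro ⟨j, hj, rfl⟩
    rw [memTakeFinRange] at hj
    have := j.is_lt
    simp only [Fin.val_rev]
    omega
  · intro h
    refine ⟨i.rev, ?_, i.rev_rev⟩
    rw [memTakeFinRange]
    have := i.is_lt
    simp only [Fin.val_rev]
    omega

private lemma cardFilterLe (k a : ℕ) :
    (Finset.univ.filter fun i : Fin k => a ≤ (i:ℕ)).card = k - a := by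
  have h : (Finset.univ.filter fun i : Fin k => a ≤ (i:ℕ)).card
      = ((Finset.map (Fin.valEmbedding (n := k)) Finset.univ).filter fun n => a ≤ n).card := by
    rw [Finset.filter_map, Finset.card_map]; rfl
  rw [h, Fin.map_valEmbedding_univ]
  have : (Finset.filter (fun n => a ≤ n) (Finset.Iio k)) = Finset.Ico a k := by
    ext n; simp [Finset.mem_Ico, and_comm]
  rw [this, Nat.card_Ico]

/-- the general tight instance for the greedy 2-approximation.
For even `k ≥ 2`, the user types and movies are both indexed by `Fin k`
(0-indexed: the user type of index `i` has probability `1/k` and patience `i + 1`,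
and movie `j` interests exactly user type `j`).  The reversed list
`[s_k, …, s₁] = (List.finRange k).reverse` satisfies the greedy property and has
coverage `1/2`, while the list `[s₁, …, s_k] = List.finRange k` has coverage `1`. -/
theorem coverage_tight_instance_general (k : ℕ) (hk : 2 ≤ k) (hke : Even k)
    (p : Fin k → Fin k → ℝ) (hp : p = fun s i => if s = i then 1 else 0)
    (f : List (Fin k) → ℝ)
    (hf : ∀ S : List (Fin k), f S =
      ∑ i : Fin k, (1 / (k : ℝ)) *
        (1 - ((S.take ((i : ℕ) + 1)).map (fun m => 1 - p m i)).prod)) :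
    (∀ l : ℕ, 1 ≤ l → l ≤ k → ∀ x : Fin k,
        f (((List.finRange k).reverse).take (l - 1) ++ [x]) ≤
          f (((List.finRange k).reverse).take l)) ∧
      f (List.finRange k).reverse = 1 / 2 ∧
      f (List.finRange k) = 1 := by
  subst hp
  have hk0 : (0:ℝ) < k := by exact_mod_cast Nat.lt_of_lt_of_le (by norm_num) hk
  have hk2 : k / 2 + k / 2 = k := by obtain ⟨m, hm⟩ := hke; omega
  -- coverage as a cardinality
  have hf' : ∀ S : List (Fin k), f S =
      ((Finset.univ.filter fun i : Fin k => i ∈ S.take ((i:ℕ)+1)).card : ℝ) / k := by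
    intro S
    have step : ∀ i : Fin k,
        (1 / (k:ℝ)) * (1 - ((S.take ((i:ℕ)+1)).map
          (fun m => 1 - (fun s i => if s = i then (1:ℝ) else 0) m i)).prod)
        = if i ∈ S.take ((i:ℕ)+1) then 1/(k:ℝ) else 0 := by
      intro i
      simp only [prodInd]
      split <;> ring
    rw [hf, Finset.sum_congr rfl fun i _ => step i, ← Finset.sum_filter,
      Finset.sum_const, nsmul_eq_mul]
    ring
  -- cardinality of coverage of reversed prefixes
  have covCard : ∀ t : ℕ,
      (Finset.univ.filter fun i : Fin k =>
        i ∈ ((List.finRange k).reverse.take t).take ((i:ℕ)+1)).card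
        = k - max (k - t) (k / 2) := by
    intro t
    have hcong : ∀ i : Fin k, (i ∈ ((List.finRange k).reverse.take t).take ((i:ℕ)+1))
        ↔ (max (k - t) (k/2) ≤ (i:ℕ)) := by
      intro i
      rw [List.take_take, memTakeRev]
      have := i.is_lt
      omega
    rw [Finset.filter_congr fun i _ => hcong i, cardFilterLe]
  refine ⟨?_, ?_, ?_⟩
  · -- greedy
    intro l hl1 hlk x
    rw [hf', hf', covCard l]
    have hsing : ∀ (n : ℕ) (i : Fin k), (i ∈ ([x] : List (Fin k)).take n) ↔ 1 ≤ n ∧ i = x := by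
      intro n i
      cases n with
      | zero => simp
      | succ m => simp
    have hPlen : ((List.finRange k).reverse.take (l-1)).length = l - 1 := by
      simp; omega
    have hmem : ∀ i : Fin k,
        (i ∈ (((List.finRange k).reverse.take (l-1)) ++ [x]).take ((i:ℕ)+1)) ↔
        (k ≤ min ((i:ℕ)+1) (l-1) + (i:ℕ) ∨ (l - 1 ≤ (i:ℕ) ∧ i = x)) := by
      intro i
      rw [List.take_append, List.mem_append, hPlen, List.take_take,
        memTakeRev, hsing]
      constructor
      · rintro (h | ⟨h1, h2⟩)
        · exact Or.inl h
        · exact Or.inr ⟨by omega, h2⟩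
      · rintro (h | ⟨h1, h2⟩)
        · exact Or.inl h
        · exact Or.inr ⟨by omega, h2⟩
    have key : (Finset.univ.filter fun i : Fin k =>
        i ∈ (((List.finRange k).reverse.take (l-1)) ++ [x]).take ((i:ℕ)+1)).card
        ≤ k - max (k - l) (k/2) := by
      rcases le_or_gt (2*l) k with hcase | hcase
      · -- small l : one extra element at most
        have hsub : (Finset.univ.filter fun i : Fin k =>
            i ∈ (((List.finRange k).reverse.take (l-1)) ++ [x]).take ((i:ℕ)+1)) ⊆
            insert x (Finset.univ.filter fun i : Fin k =>
              i ∈ ((List.finRange k).reverse.take (l-1)).take ((i:ℕ)+1)) := by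
          intro i hi
          rw [Finset.mem_filter, hmem i] at hi
          rcases hi.2 with h | h
          · refine Finset.mem_insert_of_mem ?_
            rw [Finset.mem_filter, List.take_take, memTakeRev]
            exact ⟨Finset.mem_univ _, h⟩
          · rw [h.2]; exact Finset.mem_insert_self _ _
        calc (Finset.univ.filter fun i : Fin k =>
            i ∈ (((List.finRange k).reverse.take (l-1)) ++ [x]).take ((i:ℕ)+1)).card
            ≤ (insert x (Finset.univ.filter fun i : Fin k =>
              i ∈ ((List.finRange k).reverse.take (l-1)).take ((i:ℕ)+1))).card :=
              Finset.card_le_card hsub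
          _ ≤ (Finset.univ.filter fun i : Fin k =>
              i ∈ ((List.finRange k).reverse.take (l-1)).take ((i:ℕ)+1)).card + 1 :=
              Finset.card_insert_le _ _
          _ = (k - max (k - (l-1)) (k/2)) + 1 := by rw [covCard]
          _ ≤ k - max (k - l) (k/2) := by omega
      · -- large l : no gain possible
        have hsub : (Finset.univ.filter fun i : Fin k =>
            i ∈ (((List.finRange k).reverse.take (l-1)) ++ [x]).take ((i:ℕ)+1)) ⊆
            (Finset.univ.filter fun i : Fin k =>
              i ∈ ((List.finRange k).reverse.take l).take ((i:ℕ)+1)) := by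
          intro i hi
          rw [Finset.mem_filter, hmem i] at hi
          rw [Finset.mem_filter, List.take_take, memTakeRev]
          refine ⟨Finset.mem_univ _, ?_⟩
          have := i.is_lt
          rcases hi.2 with h | h
          · omega
          · have := h.1; omega
        calc (Finset.univ.filter fun i : Fin k =>
            i ∈ (((List.finRange k).reverse.take (l-1)) ++ [x]).take ((i:ℕ)+1)).card
            ≤ (Finset.univ.filter fun i : Fin k =>
              i ∈ ((List.finRange k).reverse.take l).take ((i:ℕ)+1)).card :=
              Finset.card_le_card hsub
          _ = k - max (k - l) (k/2) := covCard l
    gcongr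
  · -- coverage of the reversed list is 1/2
    rw [show (List.finRange k).reverse = (List.finRange k).reverse.take k from
      (List.take_of_length_le (by simp)).symm, hf', covCard k]
    have h1 : k - max (k - k) (k/2) = k/2 := by omega
    rw [h1]
    have h2 : ((k/2 : ℕ) : ℝ) * 2 = (k : ℝ) := by exact_mod_cast congrArg Nat.cast (by omega : k/2*2 = k)
    rw [div_eq_div_iff hk0.ne' (by norm_num : (2:ℝ) ≠ 0)]
    linarith
  · -- coverage of the in-order list is 1
    rw [hf']
    have hall : ∀ i : Fin k, i ∈ (List.finRange k).take ((i:ℕ)+1) :=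
      fun i => (memTakeFinRange i).2 (by omega)
    rw [Finset.filter_true_of_mem fun i _ => hall i]
    simp only [Finset.card_univ, Fintype.card_fin]
    field_simp
end

section
/- Let X be a finite type (of genres) and α a type (of items). Let q : α → X → ℝ assign to each item a nonnegative weight per genre (q(i, x) ≥ 0 for all i, x), let w : ℕ → ℝ be an antitone sequence of nonnegative rank weights (w(i) ≥ w(j) ≥ 0 for i ≤ j), let c : X → ℝ be nonnegative coefficients, and let φ : ℝ → ℝ be nondecreasing and concave on [0, ∞). Then the sequence function F defined on a list S = s₁ … s_k of items by F(S) = Σ_{x ∈ X} c(x)·φ(Σ_{i=1}^{k} w(i)·q(s_i, x)) is ordered-submodular. -/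
theorem ConcaveOn.map_add_sub_map_le {𝕜 : Type*} [Field 𝕜] [LinearOrder 𝕜]
    [IsStrictOrderedRing 𝕜] {s : Set 𝕜} {f : 𝕜 → 𝕜} (hf : ConcaveOn 𝕜 s f) {x y d : 𝕜}
    (hx : x ∈ s) (hyd : y + d ∈ s) (hxy : x ≤ y) (hd : 0 ≤ d) :
    f (y + d) - f y ≤ f (x + d) - f x := by
  rcases hd.eq_or_lt with rfl | hd
  · simp
  rcases hxy.eq_or_lt with rfl | hxy
  · rfl
  have hIcc : Set.Icc x (y + d) ⊆ s := hf.1.ordConnected.out hx hyd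
  have hxd : x + d ∈ s := hIcc ⟨by linarith, by linarith⟩
  have hy : y ∈ s := hIcc ⟨hxy.le, by linarith⟩
  have h_right : slope f (y + d) y ≤ slope f (y + d) x :=
    hf.antitoneOn_slope_lt hyd ⟨hx, by linarith⟩ ⟨hy, by linarith⟩ hxy.le
  have h_left : slope f x (y + d) ≤ slope f x (x + d) :=
    hf.antitoneOn_slope_gt hx ⟨hxd, by linarith⟩ ⟨hyd, by linarith⟩ (by linarith)
  have h_slope : slope f y (y + d) ≤ slope f x (x + d) :=
    calc slope f y (y + d) = slope f (y + d) y := slope_comm ..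
      _ ≤ slope f (y + d) x := h_right
      _ = slope f x (y + d) := slope_comm ..
      _ ≤ slope f x (x + d) := h_left
  rwa [slope_def_field, slope_def_field, add_sub_cancel_left, add_sub_cancel_left,
    div_le_div_iff_of_pos_right hd] at h_slope

theorem List.sum_map_zipIdx_append_singleton_append {α M : Type*} [AddMonoid M]
    (f : α × ℕ → M) (A B : List α) (t : α) :
    ((A ++ [t] ++ B).zipIdx.map f).sum =
      (A.zipIdx.map f).sum + f (t, A.length) + ((B.zipIdx (A.length + 1)).map f).sum := by
  simp [List.zipIdx_append, add_assoc]

theorem OrderedSubmodular.sum_mul {ι α : Type*} (s : Finset ι) (c : ι → ℝ)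
    (f : ι → List α → ℝ) (hc : ∀ i ∈ s, 0 ≤ c i) (hf : ∀ i ∈ s, OrderedSubmodular (f i)) :
    OrderedSubmodular (fun S => ∑ i ∈ s, c i * f i S) := by
  intro A B t tbar
  simp only [← Finset.sum_sub_distrib, ← mul_sub]
  exact Finset.sum_le_sum fun i hi => mul_le_mul_of_nonneg_left (hf i hi A B t tbar) (hc i hi)

theorem orderedSubmodular_comp_sum_map_zipIdx {α : Type*} (g : α × ℕ → ℝ) (hg : ∀ p, 0 ≤ g p)
    {φ : ℝ → ℝ} (hφ_mono : MonotoneOn φ (Set.Ici 0)) (hφ_conc : ConcaveOn ℝ (Set.Ici 0) φ) :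
    OrderedSubmodular (fun S : List α => φ (S.zipIdx.map g).sum) := by
  intro A B s sbar
  have hsum : ∀ l : List (α × ℕ), 0 ≤ (l.map g).sum := fun l =>
    List.sum_nonneg fun y hy => by
      obtain ⟨p, -, rfl⟩ := List.mem_map.mp hy
      exact hg p
  have hA := List.sum_map_zipIdx_append_singleton_append g A [] s
  simp only [List.append_nil, List.zipIdx_nil, List.map_nil, List.sum_nil, add_zero] at hA
  simp only [List.sum_map_zipIdx_append_singleton_append, hA]
  set a := (A.zipIdx.map g).sum
  set b := ((B.zipIdx (A.length + 1)).map g).sum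
  have ha : 0 ≤ a := hsum _
  have hb : 0 ≤ b := hsum _
  have hu := hg (s, A.length)
  have hv := hg (sbar, A.length)
  have h_drop_sbar : φ (a + b) ≤ φ (a + g (sbar, A.length) + b) :=
    hφ_mono (Set.mem_Ici.2 (by positivity)) (Set.mem_Ici.2 (by positivity)) (by linarith)
  have h_drop_B : φ (a + b + g (s, A.length)) - φ (a + b) ≤ φ (a + g (s, A.length)) - φ a :=
    hφ_conc.map_add_sub_map_le ha (Set.mem_Ici.2 (by positivity)) (by linarith) hu
  rw [add_right_comm] at h_drop_B
  linarith

theorem calibration_orderedSubmodular_general {X : Type*} [Fintype X] {α : Type*}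
    (q : α → X → ℝ) (hq : ∀ i x, 0 ≤ q i x)
    (w : ℕ → ℝ) (hw_nonneg : ∀ i, 0 ≤ w i)
    (c : X → ℝ) (hc : ∀ x, 0 ≤ c x)
    (φ : ℝ → ℝ) (hφ_mono : MonotoneOn φ (Set.Ici (0 : ℝ)))
    (hφ_conc : ConcaveOn ℝ (Set.Ici (0 : ℝ)) φ) :
    OrderedSubmodular (fun S : List α =>
      ∑ x : X, c x * φ ((S.zipIdx.map (fun pr => w (pr.2 + 1) * q pr.1 x)).sum)) :=
  OrderedSubmodular.sum_mul Finset.univ c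
    (fun x S => φ ((S.zipIdx.map (fun pr => w (pr.2 + 1) * q pr.1 x)).sum))
    (fun x _ => hc x) fun x _ =>
      orderedSubmodular_comp_sum_map_zipIdx (fun pr => w (pr.2 + 1) * q pr.1 x)
        (fun _ => mul_nonneg (hw_nonneg _) (hq _ _)) hφ_mono hφ_conc

/-- the calibration objective
`F(S) = Σ_{x ∈ X} c(x) · φ(Σ_{i=1}^{k} w(i) · q(s_i, x))`
is ordered-submodular, for nonnegative item-genre weights `q`, antitone
nonnegative rank weights `w`, nonnegative coefficients `c`, and `φ`
nondecreasing and concave on `[0, ∞)`.  The inner sum over ranks is expressed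
via `List.enum` (rank `i` in the list, 1-indexed, gets weight `w i`). -/
theorem calibration_orderedSubmodular {X : Type*} [Fintype X] {α : Type*}
    (q : α → X → ℝ) (hq : ∀ i x, 0 ≤ q i x)
    (w : ℕ → ℝ) (hw_anti : ∀ i j : ℕ, i ≤ j → w j ≤ w i) (hw_nonneg : ∀ i, 0 ≤ w i)
    (c : X → ℝ) (hc : ∀ x, 0 ≤ c x)
    (φ : ℝ → ℝ) (hφ_mono : MonotoneOn φ (Set.Ici (0 : ℝ)))
    (hφ_conc : ConcaveOn ℝ (Set.Ici (0 : ℝ)) φ) :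
    OrderedSubmodular (fun S : List α =>
      ∑ x : X, c x * φ ((S.zipIdx.map (fun pr => w (pr.2 + 1) * q pr.1 x)).sum)) :=
  calibration_orderedSubmodular_general q hq w hw_nonneg c hc φ hφ_mono hφ_conc
end

section
/- Let X be a finite type (of genres) and α a type (of items). Let p : X → ℝ be a nonnegative target genre distribution, let q : α → X → ℝ assign to each item a nonnegative weight per genre, and let w : ℕ → ℝ be an antitone sequence of nonnegative rank weights. Then the squared-Hellinger-based overlap sequence function F defined on a list S = s₁ … s_k of items by F(S) = Σ_{x ∈ X} sqrt( p(x) · Σ_{i=1}^{k} w(i)·q(s_i, x) ) is ordered-submodular. -/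
theorem OrderedSubmodular.sum {ι α : Type*} {f : ι → List α → ℝ} (t : Finset ι)
    (hf : ∀ i ∈ t, OrderedSubmodular (f i)) :
    OrderedSubmodular fun S => ∑ i ∈ t, f i S := by
  intro A B s sbar
  simp only [← Finset.sum_sub_distrib]
  exact Finset.sum_le_sum fun i hi => hf i hi A B s sbar

/-- `u + c` and `u + T` are the convex combinations of `u` and `u + c + T` with weights
`(T, c) / (c + T)` and `(c, T) / (c + T)`; adding the two concavity inequalities gives the claim. -/
theorem ConcaveOn.map_add_add_sub_map_add_le {𝕜 : Type*} [Field 𝕜] [LinearOrder 𝕜]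
    [IsStrictOrderedRing 𝕜] {s : Set 𝕜} {f : 𝕜 → 𝕜} (hf : ConcaveOn 𝕜 s f) {u c T : 𝕜}
    (hu : u ∈ s) (hz : u + c + T ∈ s) (hc : 0 ≤ c) (hT : 0 ≤ T) :
    f (u + c + T) - f (u + T) ≤ f (u + c) - f u := by
  rcases (add_nonneg hc hT).eq_or_lt with hcT | hcT
  · obtain rfl : c = 0 := by linarith
    simp
  have hsum : T / (c + T) + c / (c + T) = 1 := by field_simp; ring
  have h₁ := hf.2 hu hz (by positivity) (by positivity) hsum
  have h₂ := hf.2 hu hz (by positivity) (by positivity) ((add_comm _ _).trans hsum)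
  have e₁ : T / (c + T) * u + c / (c + T) * (u + c + T) = u + c := by field_simp; ring
  have e₂ : c / (c + T) * u + T / (c + T) * (u + c + T) = u + T := by field_simp; ring
  simp only [smul_eq_mul, e₁, e₂] at h₁ h₂
  linear_combination h₁ + h₂ - (f u + f (u + c + T)) * hsum

section WeightedRankSum

variable {α : Type*} (v : ℕ → α → ℝ)

def weightedRankSum (n : ℕ) (S : List α) : ℝ :=
  ((S.zipIdx n).map fun pr => v pr.2 pr.1).sum

theorem weightedRankSum_append (n : ℕ) (S T : List α) :
    weightedRankSum v n (S ++ T) = weightedRankSum v n S + weightedRankSum v (n + S.length) T := by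
  simp [weightedRankSum, List.zipIdx_append]

theorem weightedRankSum_singleton (n : ℕ) (a : α) : weightedRankSum v n [a] = v n a := by
  simp [weightedRankSum]

theorem weightedRankSum_nonneg (hv : ∀ i a, 0 ≤ v i a) (n : ℕ) (S : List α) :
    0 ≤ weightedRankSum v n S :=
  List.sum_nonneg fun _ hy => by
    obtain ⟨pr, -, rfl⟩ := List.mem_map.mp hy
    exact hv _ _

theorem orderedSubmodular_comp_weightedRankSum {f : ℝ → ℝ} (hf : ConcaveOn ℝ (Set.Ici 0) f)
    (hmono : MonotoneOn f (Set.Ici 0)) (hv : ∀ i a, 0 ≤ v i a) :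
    OrderedSubmodular fun S => f (weightedRankSum v 0 S) := by
  intro A B s sbar
  simp only [weightedRankSum_append, weightedRankSum_singleton, List.length_append,
    List.length_singleton, zero_add]
  set u := weightedRankSum v 0 A
  set T := weightedRankSum v (A.length + 1) B
  have hu : 0 ≤ u := weightedRankSum_nonneg v hv _ _
  have hT : 0 ≤ T := weightedRankSum_nonneg v hv _ _
  have hs := hv A.length s
  have hsbar := hv A.length sbar
  have hconc : f (u + v A.length s + T) - f (u + T) ≤ f (u + v A.length s) - f u :=
    hf.map_add_add_sub_map_add_le hu (Set.mem_Ici.2 (by positivity)) hs hT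
  have hmono' : f (u + T) ≤ f (u + v A.length sbar + T) :=
    hmono (Set.mem_Ici.2 (by positivity)) (Set.mem_Ici.2 (by positivity)) (by linarith)
  linarith

end WeightedRankSum

theorem hellinger_overlap_orderedSubmodular_general {X : Type*} [Fintype X] {α : Type*}
    (p : X → ℝ) (hp : ∀ x, 0 ≤ p x)
    (q : α → X → ℝ) (hq : ∀ i x, 0 ≤ q i x)
    (w : ℕ → ℝ)
    (hw_nonneg : ∀ i, 0 ≤ w i) :
    OrderedSubmodular (fun S : List α =>
      ∑ x : X,
        Real.sqrt (p x * (S.zipIdx.map (fun pr => w (pr.2 + 1) * q pr.1 x)).sum)) := by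
  refine OrderedSubmodular.sum Finset.univ fun x _ => ?_
  have h := orderedSubmodular_comp_weightedRankSum (fun i a => p x * (w (i + 1) * q a x))
    Real.strictConcaveOn_sqrt.concaveOn (Real.sqrt_monotone.monotoneOn _)
    fun i a => mul_nonneg (hp x) (mul_nonneg (hw_nonneg _) (hq _ _))
  simpa only [weightedRankSum, List.sum_map_mul_left] using h

/-- the squared-Hellinger-based overlap objective
`F(S) = Σ_{x ∈ X} sqrt(p(x) · Σ_{i=1}^{k} w(i) · q(s_i, x))`
is ordered-submodular, for a nonnegative target distribution `p`, nonnegative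
item-genre weights `q`, and antitone nonnegative rank weights `w`.  The inner
sum over ranks is expressed via `List.enum` (rank `i`, 1-indexed, gets weight `w i`). -/
theorem hellinger_overlap_orderedSubmodular {X : Type*} [Fintype X] {α : Type*}
    (p : X → ℝ) (hp : ∀ x, 0 ≤ p x)
    (q : α → X → ℝ) (hq : ∀ i x, 0 ≤ q i x)
    (w : ℕ → ℝ) (hw_anti : ∀ i j : ℕ, i ≤ j → w j ≤ w i)
    (hw_nonneg : ∀ i, 0 ≤ w i) :
    OrderedSubmodular (fun S : List α =>
      ∑ x : X,
        Real.sqrt (p x * (S.zipIdx.map (fun pr => w (pr.2 + 1) * q pr.1 x)).sum)) :=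
  hellinger_overlap_orderedSubmodular_general p hp q hq w hw_nonneg
end

section
/- The following two real inequalities hold: sqrt(0.39) + sqrt(0.11) > sqrt(0.41) + sqrt(0.09), and sqrt(0.14) + sqrt(0.36) < sqrt(0.16) + sqrt(0.34). (Equivalently, for the squared-Hellinger overlap G(p,q) = Σ_g sqrt(p(g)·q(g)) with uniform target p = (0.5, 0.5), the instance with rank weights (0.5, 0.3, 0.2) and items with genre-1 weights (0.4, 0.8, 1, 0) satisfies G(p,(0.78,0.22)) > G(p,(0.82,0.18)) while G(p,(0.28,0.72)) < G(p,(0.32,0.68)): whether item i₁ should be ranked before item i₂ depends on the other items in the list, so pairwise precedence relations cannot encode these sequential dependencies.) -/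
lemma aux {a b c d : ℝ} (ha : 0 ≤ a) (hb : 0 ≤ b) (hc : 0 ≤ c) (hd : 0 ≤ d)
    (hs : a + b = c + d) (hp : a * b < c * d) :
    Real.sqrt a + Real.sqrt b < Real.sqrt c + Real.sqrt d := by
  have h1 : Real.sqrt a * Real.sqrt b = Real.sqrt (a * b) := (Real.sqrt_mul ha b).symm
  have h2 : Real.sqrt c * Real.sqrt d = Real.sqrt (c * d) := (Real.sqrt_mul hc d).symm
  have h3 : Real.sqrt (a * b) < Real.sqrt (c * d) :=
    Real.sqrt_lt_sqrt (by positivity) hp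
  nlinarith [Real.sq_sqrt ha, Real.sq_sqrt hb, Real.sq_sqrt hc, Real.sq_sqrt hd,
    Real.sqrt_nonneg a, Real.sqrt_nonneg b, Real.sqrt_nonneg c, Real.sqrt_nonneg d]

/-- the two square-root inequalities showing that in the
calibration problem, whether item `i₁` should be ranked before item `i₂` depends
on the rest of the list:
`sqrt 0.39 + sqrt 0.11 > sqrt 0.41 + sqrt 0.09` and
`sqrt 0.14 + sqrt 0.36 < sqrt 0.16 + sqrt 0.34`. -/
theorem calibration_context_dependent_order :
    Real.sqrt 0.41 + Real.sqrt 0.09 < Real.sqrt 0.39 + Real.sqrt 0.11 ∧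
      Real.sqrt 0.14 + Real.sqrt 0.36 < Real.sqrt 0.16 + Real.sqrt 0.34 := by
  constructor
  · exact aux (by norm_num) (by norm_num) (by norm_num) (by norm_num) (by norm_num) (by norm_num)
  · exact aux (by norm_num) (by norm_num) (by norm_num) (by norm_num) (by norm_num) (by norm_num)
end
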